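/- Let Fix(Ψ) = {h ∈ C(K) : Ψ(h) = h} and L = {π(|h|²) − |h|² : h ∈ Fix(Ψ)}. Then the norm-closed ideal of C(K) generated by L equals the ideal of all f ∈ C(K) that vanish identically on ∂U. -/

import Mathlib

open MeasureTheory Filter Topology ComplexOrder

/-- `Φ` is a Markov operator on the bounded Borel measurable functions on `U`:
for each `x` there is a Borel probability measure `P x` representing `Φ` at `x`. -/
def IsMarkovOperator {U : Type*} [MeasurableSpace U]
    (Φ : (U → ℂ) → (U → ℂ)) : Prop :=
  ∀ x : U, ∃ P : Measure U, IsProbabilityMeasure P ∧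
    ∀ f : U → ℂ, Measurable f → (∃ C : ℝ, ∀ y, ‖f y‖ ≤ C) →
      Φ f x = ∫ y, f y ∂P

/-- `Φ` has the strong Feller property: it maps bounded Borel measurable
functions to continuous functions. -/
def HasStrongFeller {U : Type*} [MeasurableSpace U] [TopologicalSpace U]
    (Φ : (U → ℂ) → (U → ℂ)) : Prop :=
  ∀ f : U → ℂ, Measurable f → (∃ C : ℝ, ∀ y, ‖f y‖ ≤ C) → Continuous (Φ f)

/-- Boundary condition (A): for each boundary point `x` there is a barrier
`h ∈ C(K)` with `h x = 0`, `h < 0` off `x`, and `Φ (h_U) ≥ h_U` on `U`. -/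
def CondA {K : Type*} [TopologicalSpace K] (U : Set K)
    (Φ : (↥U → ℂ) → (↥U → ℂ)) : Prop :=
  ∀ x ∈ Uᶜ, ∃ h : C(K, ℂ), h x = 0 ∧ (∀ y : K, y ≠ x → h y < 0) ∧
    ∀ u : ↥U, h u.1 ≤ Φ (fun v : ↥U => h v.1) u

/-- Maximum principle (B): every real-valued `g ∈ C(K)` with `Φ (g_U) ≥ g_U`
on `U` attaining its global maximum inside `U` is constant. -/
def CondB {K : Type*} [TopologicalSpace K] (U : Set K)
    (Φ : (↥U → ℂ) → (↥U → ℂ)) : Prop :=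
  ∀ g : C(K, ℂ), (∀ x : K, (g x).im = 0) →
    (∀ u : ↥U, g u.1 ≤ Φ (fun v : ↥U => g v.1) u) →
    (∃ z ∈ U, ∀ x : K, g x ≤ g z) →
    ∀ x y : K, g x = g y

/-- The map `Ψ` : `Ψ f = Φ (f_U)` on `U` and `Ψ f = f` on `∂U = K \ U`. -/
noncomputable def psiFun {K : Type*} (U : Set K)
    (Φ : (↥U → ℂ) → (↥U → ℂ)) (f : K → ℂ) : K → ℂ :=
  open Classical in fun x => if hx : x ∈ U then Φ (fun v : ↥U => f v.1) ⟨x, hx⟩ else f x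

open Filter in
/-- The set `L = {π(|h|²) − |h|² : h ∈ Fix(Ψ)}`, where `π(|h|²)` is the
uniform limit of `{Ψⁿ(|h|²)}` (so `g ∈ L` iff `g + |h|²` is that limit
for some `h` fixed by `Ψ`). -/
def Lset {K : Type*} [TopologicalSpace K] (U : Set K)
    (Φ : (↥U → ℂ) → (↥U → ℂ)) : Set C(K, ℂ) :=
  {g | ∃ h : C(K, ℂ), psiFun U Φ ⇑h = ⇑h ∧
    TendstoUniformly
      (fun n y => (psiFun U Φ)^[n] (fun z => ((‖h z‖ ^ 2 : ℝ) : ℂ)) y)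
      (fun y => g y + ((‖h y‖ ^ 2 : ℝ) : ℂ)) atTop}

/-!
On `∂U` the map `Ψ` is the identity and on `U` it integrates against `P_x`, so on bounded
measurable functions `Ψ` is integration against a family of probability measures on `K`.
If `h` is the barrier of (A) at `x ∈ ∂U`, then for continuous `f` and `ε > 0` some `C ≥ 0`
gives `|f - f x| ≤ ε - C h`, and this bound is preserved by `Ψ` because `h ≤ Ψ h`. Hence `Ψ`
preserves `C(K)`, and for continuous real `f ≤ Ψ f` the increasing iterates `Ψⁿ f` converge
(uniformly, by Dini) to a continuous fixed point equal to `f` on `∂U`.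

Relaxing the barrier at `a ∈ ∂U` this way gives a real `h ∈ Fix(Ψ)` with `h a = 0 ≠ h b`.
By Jensen `|h|² ≤ Ψ |h|²`, so `g = π(|h|²) - |h|² ∈ L`. If `g z = 0` for some `z ∈ U`, (B)
applied to `|h|² - π(|h|²)` makes `|h|²` a fixed point, and (B) applied to `-(h - h z)²` then
makes `h` constant. So `g` vanishes nowhere on `U`, while all of `L` vanishes on `∂U`, and
closed ideals of `C(K)` are determined by their zero sets.
-/

section Topology

variable {X : Type*} [TopologicalSpace X]

theorem exists_norm_sub_le_sub_mul [CompactSpace X] {E : Type*} [SeminormedAddCommGroup E]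
    {f : X → E} (hf : Continuous f) {b : X → ℝ} (hb : Continuous b) {x : X} (hb_nonpos : ∀ y, b y ≤ 0) (hb_neg : ∀ y ≠ x, b y < 0)
    {ε : ℝ} (hε : 0 < ε) : ∃ C, 0 ≤ C ∧ ∀ y, ‖f y - f x‖ ≤ ε - C * b y := by
  have hd : Continuous fun y => ‖f y - f x‖ := by fun_prop
  set S := {y | ε ≤ ‖f y - f x‖}
  have hS : IsCompact S := (isClosed_le continuous_const hd).isCompact
  have hSx : ∀ y ∈ S, y ≠ x := by
    rintro y hy rfl
    simp only [S, Set.mem_ofPred_eq, sub_self, norm_zero] at hy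
    linarith
  obtain ⟨δ, hδ, hδS⟩ := hS.exists_forall_le' hb.neg.continuousOn
    fun y hy => neg_pos.2 (hb_neg y (hSx y hy))
  obtain ⟨M, hM⟩ := isCompact_univ.exists_bound_of_continuousOn hd.continuousOn
  have hM0 : 0 ≤ M := (norm_nonneg _).trans (hM x (Set.mem_univ x))
  refine ⟨M / δ, by positivity, fun y => ?_⟩
  by_cases hy : y ∈ S
  · calc ‖f y - f x‖ ≤ M := by simpa using hM y (Set.mem_univ y)
      _ = M / δ * δ := by field_simp
      _ ≤ M / δ * -b y := by gcongr; exact hδS y hy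
      _ ≤ ε - M / δ * b y := by linarith
  · have : 0 ≤ M / δ * -b y := mul_nonneg (by positivity) (neg_nonneg.2 (hb_nonpos y))
    simp only [S, Set.mem_ofPred_eq, not_le] at hy
    linarith

theorem continuousAt_of_forall_norm_sub_le {E : Type*} [SeminormedAddCommGroup E] {g : X → E}
    {b : X → ℝ} {x : X} (hb : ContinuousAt b x) (hbx : b x = 0)
    (h : ∀ ε > 0, ∃ C, ∀ y, ‖g y - g x‖ ≤ ε - C * b y) : ContinuousAt g x := by
  refine Metric.continuousAt_iff'.2 fun ε hε => ?_
  obtain ⟨C, hC⟩ := h (ε / 2) (half_pos hε)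
  have hlim : Tendsto (fun y => ε / 2 - C * b y) (𝓝 x) (𝓝 (ε / 2)) := by
    simpa [hbx] using (hb.const_mul C).const_sub (ε / 2)
  filter_upwards [hlim.eventually_lt_const (half_lt_self hε)] with y hy
  exact dist_eq_norm (g y) (g x) ▸ (hC y).trans_lt hy

theorem Complex.exists_tendsto_of_monotone {u : ℕ → ℂ} (hu : Monotone u) {C : ℝ}
    (hC : ∀ n, ‖u n‖ ≤ C) : ∃ l, Tendsto u atTop (𝓝 l) ∧ ∀ n, u n ≤ l := by
  have hre : Monotone fun n => (u n).re := fun m n h => (Complex.le_def.1 (hu h)).1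
  have him : ∀ n, (u n).im = (u 0).im := fun n => (Complex.le_def.1 (hu (Nat.zero_le n))).2.symm
  have hbdd : BddAbove (Set.range fun n => (u n).re) :=
    ⟨C, by rintro _ ⟨n, rfl⟩; exact (Complex.re_le_norm _).trans (hC n)⟩
  refine ⟨(⨆ n, (u n).re : ℝ) + (u 0).im * Complex.I, ?_, fun n => ?_⟩
  · refine (((Complex.continuous_ofReal.tendsto _).comp (tendsto_atTop_ciSup hre hbdd)).add_const
      _).congr fun n => ?_
    apply Complex.ext <;> simp [him n]
  · rw [Complex.le_def]
    simpa [him n] using le_ciSup hbdd n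

theorem Complex.tendstoUniformly_of_monotone [CompactSpace X] {F : ℕ → X → ℂ} {q : X → ℂ}
    (hF : ∀ n, Continuous (F n)) (hmono : Monotone F) (hq : Continuous q)
    (hlim : ∀ y, Tendsto (fun n => F n y) atTop (𝓝 (q y))) : TendstoUniformly F q atTop := by
  have hre : TendstoUniformly (fun n y => (F n y).re) (fun y => (q y).re) atTop :=
    Monotone.tendstoUniformly_of_forall_tendsto (fun n => Complex.continuous_re.comp (hF n))
      (fun m n h y => (Complex.le_def.1 (hmono h y)).1) (Complex.continuous_re.comp hq)
      fun y => (Complex.continuous_re.tendsto _).comp (hlim y)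
  have him : ∀ n y, (q y).im = (F n y).im := fun n y =>
    tendsto_nhds_unique ((Complex.continuous_im.tendsto _).comp (hlim y))
      (tendsto_const_nhds.congr' (eventually_atTop.2 ⟨n, fun m hm =>
        (Complex.le_def.1 (hmono hm y)).2⟩))
  rw [Metric.tendstoUniformly_iff] at hre ⊢
  intro ε hε
  filter_upwards [hre ε hε] with n hn y
  rw [Complex.dist_of_im_eq (him n y)]
  exact hn y

theorem ContinuousMap.closure_eq_idealOfSet {𝕜 : Type*} [RCLike 𝕜] [CompactSpace X] [T2Space X]
    {I : Ideal C(X, 𝕜)} {s : Set X} (hI : I ≤ idealOfSet 𝕜 s)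
    (hs : ∀ x ∈ s, ∃ f ∈ I, f x ≠ 0) : I.closure = idealOfSet 𝕜 s := by
  rw [← idealOfSet_ofIdeal_eq_closure]
  congr 1
  ext x
  refine ⟨fun hx => ?_, fun hx => mem_setOfIdeal.2 (hs x hx)⟩
  obtain ⟨f, hf, hfx⟩ := mem_setOfIdeal.1 hx
  by_contra hxs
  exact hfx (mem_idealOfSet.1 (hI hf) hxs)

end Topology

section BoundedMeasurable

variable {α : Type*} [MeasurableSpace α]

def IsBoundedMeasurable (f : α → ℂ) : Prop :=
  Measurable f ∧ ∃ C : ℝ, ∀ y, ‖f y‖ ≤ C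

theorem IsBoundedMeasurable.integrable {f : α → ℂ} (hf : IsBoundedMeasurable f) (μ : Measure α)
    [IsFiniteMeasure μ] : Integrable f μ :=
  let ⟨C, hC⟩ := hf.2
  .of_bound hf.1.aestronglyMeasurable C (ae_of_all _ hC)

theorem IsBoundedMeasurable.comp_measurable {β : Type*} [MeasurableSpace β] {f : α → ℂ}
    (hf : IsBoundedMeasurable f) {g : β → α} (hg : Measurable g) : IsBoundedMeasurable (f ∘ g) :=
  ⟨hf.1.comp hg, hf.2.imp fun _ hC y => hC (g y)⟩

theorem isBoundedMeasurable_const (c : ℂ) : IsBoundedMeasurable fun _ : α => c :=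
  ⟨measurable_const, ‖c‖, fun _ => le_rfl⟩

theorem IsBoundedMeasurable.add {f g : α → ℂ} (hf : IsBoundedMeasurable f)
    (hg : IsBoundedMeasurable g) : IsBoundedMeasurable fun y => f y + g y :=
  let ⟨C, hC⟩ := hf.2
  let ⟨D, hD⟩ := hg.2
  ⟨hf.1.add hg.1, C + D, fun y => (norm_add_le _ _).trans (add_le_add (hC y) (hD y))⟩

theorem IsBoundedMeasurable.const_mul {f : α → ℂ} (hf : IsBoundedMeasurable f) (c : ℂ) :
    IsBoundedMeasurable fun y => c * f y :=
  let ⟨C, hC⟩ := hf.2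
  ⟨hf.1.const_mul c, ‖c‖ * C, fun y => by
    rw [norm_mul]; exact mul_le_mul_of_nonneg_left (hC y) (norm_nonneg c)⟩

theorem IsBoundedMeasurable.ofReal_sq_norm {f : α → ℂ} (hf : IsBoundedMeasurable f) :
    IsBoundedMeasurable fun y => ((‖f y‖ ^ 2 : ℝ) : ℂ) :=
  let ⟨C, hC⟩ := hf.2
  ⟨Complex.measurable_ofReal.comp (hf.1.norm.pow_const 2), C ^ 2, fun y => by
    rw [Complex.norm_real, Real.norm_of_nonneg (by positivity)]
    exact pow_le_pow_left₀ (norm_nonneg _) (hC y) 2⟩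

theorem IsBoundedMeasurable.of_tendsto {F : ℕ → α → ℂ} {q : α → ℂ} {C : ℝ}
    (hF : ∀ n, Measurable (F n)) (hC : ∀ n y, ‖F n y‖ ≤ C)
    (hq : ∀ y, Tendsto (fun n => F n y) atTop (𝓝 (q y))) : IsBoundedMeasurable q :=
  ⟨measurable_of_tendsto_metrizable hF (tendsto_pi_nhds.2 hq), C,
    fun y => le_of_tendsto' (hq y).norm fun n => hC n y⟩

theorem Continuous.isBoundedMeasurable [TopologicalSpace α] [CompactSpace α]
    [OpensMeasurableSpace α] {f : α → ℂ} (hf : Continuous f) : IsBoundedMeasurable f :=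
  ⟨hf.measurable, (isCompact_univ.exists_bound_of_continuousOn hf.continuousOn).imp
    fun _ hC y => hC y (Set.mem_univ y)⟩

end BoundedMeasurable

section Markov

variable {K : Type*} {U : Set K} {Φ : (U → ℂ) → (U → ℂ)}

theorem psiFun_of_mem (f : K → ℂ) {x : K} (hx : x ∈ U) :
    psiFun U Φ f x = Φ (fun v : U => f v) ⟨x, hx⟩ :=
  dif_pos hx

theorem psiFun_of_notMem (f : K → ℂ) {x : K} (hx : x ∉ U) : psiFun U Φ f x = f x :=
  dif_neg hx

theorem iterate_psiFun_of_notMem (f : K → ℂ) {x : K} (hx : x ∉ U) (n : ℕ) :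
    (psiFun U Φ)^[n] f x = f x := by
  induction n with
  | zero => rfl
  | succ n ih => rw [Function.iterate_succ_apply', psiFun_of_notMem _ hx, ih]

theorem eq_of_tendsto_iterate_psiFun {f : K → ℂ} {x : K} {l : ℂ}
    (hl : Tendsto (fun n => (psiFun U Φ)^[n] f x) atTop (𝓝 l)) (hx : x ∉ U) : l = f x :=
  tendsto_nhds_unique hl (by simp only [iterate_psiFun_of_notMem f hx, tendsto_const_nhds])

variable [MeasurableSpace K]

theorem IsMarkovOperator.exists_psiFun_eq_integral (hM : IsMarkovOperator Φ) :
    ∃ μ : K → Measure K, (∀ x, IsProbabilityMeasure (μ x)) ∧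
      ∀ f : K → ℂ, IsBoundedMeasurable f → ∀ x, psiFun U Φ f x = ∫ y, f y ∂μ x := by
  classical
  choose P hP hrep using hM
  refine ⟨fun x => if hx : x ∈ U then (P ⟨x, hx⟩).map (↑) else .dirac x, fun x => ?_,
    fun f hf x => ?_⟩
  · dsimp only
    split_ifs
    · exact Measure.isProbabilityMeasure_map measurable_subtype_coe.aemeasurable
    · infer_instance
  · dsimp only
    by_cases hx : x ∈ U
    · have hfU := hf.comp_measurable (measurable_subtype_coe (p := (· ∈ U)))
      rw [psiFun_of_mem f hx, hrep _ (fun v => f v) hfU.1 hfU.2, dif_pos hx,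
        integral_map measurable_subtype_coe.aemeasurable hf.1.aestronglyMeasurable]
    · rw [psiFun_of_notMem f hx, dif_neg hx, integral_dirac' f x hf.1.stronglyMeasurable]

theorem psiFun_const_add_mul_add_mul (hM : IsMarkovOperator Φ) {f g : K → ℂ}
    (hf : IsBoundedMeasurable f) (hg : IsBoundedMeasurable g) (a b c : ℂ) (x : K) :
    psiFun U Φ (fun y => a + b * f y + c * g y) x =
      a + b * psiFun U Φ f x + c * psiFun U Φ g x := by
  obtain ⟨μ, hμ, hrep⟩ := hM.exists_psiFun_eq_integral (U := U) (Φ := Φ)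
  have hbf := (isBoundedMeasurable_const a).add (hf.const_mul b)
  rw [hrep _ (hbf.add (hg.const_mul c)), hrep f hf, hrep g hg,
    integral_add (hbf.integrable _) ((hg.const_mul c).integrable _),
    integral_add (integrable_const a) ((hf.const_mul b).integrable _),
    integral_const_mul, integral_const_mul, integral_const, probReal_univ, one_smul]

theorem psiFun_mono (hM : IsMarkovOperator Φ) {f g : K → ℂ} (hf : IsBoundedMeasurable f)
    (hg : IsBoundedMeasurable g) (hfg : f ≤ g) (x : K) : psiFun U Φ f x ≤ psiFun U Φ g x := by
  obtain ⟨μ, hμ, hrep⟩ := hM.exists_psiFun_eq_integral (U := U) (Φ := Φ)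
  rw [hrep f hf, hrep g hg]
  exact integral_mono (hf.integrable _) (hg.integrable _) hfg

theorem norm_psiFun_le (hM : IsMarkovOperator Φ) {f : K → ℂ} (hf : Measurable f) {C : ℝ}
    (hC : ∀ y, ‖f y‖ ≤ C) (x : K) : ‖psiFun U Φ f x‖ ≤ C := by
  obtain ⟨μ, hμ, hrep⟩ := hM.exists_psiFun_eq_integral (U := U) (Φ := Φ)
  rw [hrep f ⟨hf, C, hC⟩]
  simpa using norm_integral_le_of_norm_le_const (μ := μ x) (ae_of_all _ hC)

theorem norm_psiFun_sub_le (hM : IsMarkovOperator Φ) {g b : K → ℂ} (hg : IsBoundedMeasurable g)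
    (hb : IsBoundedMeasurable b) {c : ℂ} {ε C : ℝ} (hC : 0 ≤ C)
    (hbound : ∀ y, ‖g y - c‖ ≤ ε - C * (b y).re) {x : K}
    (hbx : (b x).re ≤ (psiFun U Φ b x).re) : ‖psiFun U Φ g x - c‖ ≤ ε - C * (b x).re := by
  obtain ⟨μ, hμ, hrep⟩ := hM.exists_psiFun_eq_integral (U := U) (Φ := Φ)
  have hbre : Integrable (fun y => (b y).re) (μ x) := (hb.integrable _).re
  calc ‖psiFun U Φ g x - c‖ = ‖∫ y, (g y - c) ∂μ x‖ := by
        rw [hrep g hg, integral_sub (hg.integrable _) (integrable_const c), integral_const,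
          probReal_univ, one_smul]
    _ ≤ ∫ y, (ε - C * (b y).re) ∂μ x :=
        norm_integral_le_of_norm_le ((integrable_const ε).sub (hbre.const_mul C))
          (ae_of_all _ hbound)
    _ = ε - C * (psiFun U Φ b x).re := by
        rw [integral_sub (integrable_const ε) (hbre.const_mul C), integral_const, probReal_univ,
          one_smul, integral_const_mul, hrep b hb]
        exact congrArg (ε - C * ·) (integral_re (hb.integrable _))
    _ ≤ ε - C * (b x).re := by gcongr

theorem ofReal_sq_norm_psiFun_le (hM : IsMarkovOperator Φ) {f : K → ℂ}
    (hf : IsBoundedMeasurable f) (x : K) :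
    ((‖psiFun U Φ f x‖ ^ 2 : ℝ) : ℂ) ≤ psiFun U Φ (fun y => ((‖f y‖ ^ 2 : ℝ) : ℂ)) x := by
  obtain ⟨μ, hμ, hrep⟩ := hM.exists_psiFun_eq_integral (U := U) (Φ := Φ)
  rw [hrep f hf, hrep _ hf.ofReal_sq_norm, integral_complex_ofReal, Complex.real_le_real]
  have hsq : Integrable (fun y => ‖f y‖ ^ 2) (μ x) := by
    simpa using (hf.ofReal_sq_norm.integrable (μ x)).norm
  exact (convexOn_univ_norm.pow (fun _ _ => norm_nonneg _) 2).map_integral_le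
    (continuous_norm.pow 2).continuousOn isClosed_univ (ae_of_all _ fun _ => Set.mem_univ _)
    (hf.integrable _) hsq

theorem tendsto_psiFun (hM : IsMarkovOperator Φ) {F : ℕ → K → ℂ} {q : K → ℂ} {C : ℝ}
    (hF : ∀ n, Measurable (F n)) (hC : ∀ n y, ‖F n y‖ ≤ C)
    (hq : ∀ y, Tendsto (fun n => F n y) atTop (𝓝 (q y))) (x : K) :
    Tendsto (fun n => psiFun U Φ (F n) x) atTop (𝓝 (psiFun U Φ q x)) := by
  obtain ⟨μ, hμ, hrep⟩ := hM.exists_psiFun_eq_integral (U := U) (Φ := Φ)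
  simp only [hrep _ ⟨hF _, C, hC _⟩, hrep q (.of_tendsto hF hC hq)]
  exact tendsto_integral_of_dominated_convergence (fun _ => C)
    (fun n => (hF n).aestronglyMeasurable) (integrable_const C) (fun n => ae_of_all _ (hC n))
    (ae_of_all _ hq)

end Markov

theorem apply_eq_zero_of_mem_Lset {K : Type*} [TopologicalSpace K] {U : Set K}
    {Φ : (U → ℂ) → (U → ℂ)} {g : C(K, ℂ)} (hg : g ∈ Lset U Φ) {x : K} (hx : x ∉ U) :
    g x = 0 := by
  obtain ⟨h, -, hlim⟩ := hg
  simpa using eq_of_tendsto_iterate_psiFun (hlim.tendsto_at x) hx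

section Continuity

variable {K : Type*} [TopologicalSpace K] {U : Set K}
  {Φ : (U → ℂ) → (U → ℂ)}

theorem CondA.exists_le_psiFun (hA : CondA U Φ) {x : K} (hx : x ∉ U) :
    ∃ h : C(K, ℂ), h x = 0 ∧ (∀ y ≠ x, h y < 0) ∧ ⇑h ≤ psiFun U Φ h := by
  obtain ⟨h, hx0, hneg, hsub⟩ := hA x hx
  refine ⟨h, hx0, hneg, fun y => ?_⟩
  by_cases hy : y ∈ U
  · rw [psiFun_of_mem _ hy]
    exact hsub ⟨y, hy⟩
  · rw [psiFun_of_notMem _ hy]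

theorem CondA.exists_barrier [CompactSpace K] (hA : CondA U Φ) {f : K → ℂ} (hf : Continuous f)
    {x : K} (hx : x ∉ U) : ∃ h : C(K, ℂ), h x = 0 ∧ ⇑h ≤ psiFun U Φ h ∧
      ∀ ε > 0, ∃ C, 0 ≤ C ∧ ∀ y, ‖f y - f x‖ ≤ ε - C * (h y).re := by
  obtain ⟨h, hx0, hneg, hsub⟩ := hA.exists_le_psiFun hx
  have hre_neg : ∀ y ≠ x, (h y).re < 0 := fun y hy => (Complex.lt_def.1 (hneg y hy)).1
  refine ⟨h, hx0, hsub, fun ε hε => exists_norm_sub_le_sub_mul hf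
    (Complex.continuous_re.comp h.continuous) (fun y => ?_) hre_neg hε⟩
  rcases eq_or_ne y x with rfl | hy
  · simp [hx0]
  · exact (hre_neg y hy).le

variable [MeasurableSpace K]

theorem continuousOn_psiFun (hSF : HasStrongFeller Φ) {f : K → ℂ} (hf : IsBoundedMeasurable f) :
    ContinuousOn (psiFun U Φ f) U := by
  have hfU := hf.comp_measurable (measurable_subtype_coe (p := (· ∈ U)))
  rw [continuousOn_iff_continuous_domRestrict]
  convert hSF (fun v => f v) hfU.1 hfU.2 using 1
  funext v
  exact psiFun_of_mem f v.2

variable [CompactSpace K] [OpensMeasurableSpace K]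
variable (hM : IsMarkovOperator Φ) (hSF : HasStrongFeller Φ) (hU : IsOpen U) (hA : CondA U Φ)
include hM hSF hU hA

theorem continuous_psiFun {f : K → ℂ} (hf : Continuous f) : Continuous (psiFun U Φ f) := by
  refine continuous_iff_continuousAt.2 fun x => ?_
  by_cases hx : x ∈ U
  · exact (continuousOn_psiFun hSF hf.isBoundedMeasurable).continuousAt (hU.mem_nhds hx)
  obtain ⟨h, hx0, hsub, hbound⟩ := hA.exists_barrier hf hx
  refine continuousAt_of_forall_norm_sub_le (Complex.continuous_re.comp h.continuous).continuousAt
    (by simp [hx0]) fun ε hε => ?_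
  obtain ⟨C, hC, hfC⟩ := hbound ε hε
  refine ⟨C, fun y => ?_⟩
  rw [psiFun_of_notMem f hx]
  exact norm_psiFun_sub_le hM hf.isBoundedMeasurable h.continuous.isBoundedMeasurable hC hfC
    (Complex.le_def.1 (hsub y)).1

theorem continuous_iterate_psiFun {f : K → ℂ} (hf : Continuous f) (n : ℕ) :
    Continuous ((psiFun U Φ)^[n] f) := by
  induction n with
  | zero => exact hf
  | succ n ih =>
    rw [Function.iterate_succ_apply']
    exact continuous_psiFun hM hSF hU hA ih

theorem norm_iterate_psiFun_le {f : K → ℂ} (hf : Continuous f) {C : ℝ} (hC : ∀ y, ‖f y‖ ≤ C)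
    (n : ℕ) (y : K) : ‖(psiFun U Φ)^[n] f y‖ ≤ C := by
  induction n generalizing y with
  | zero => exact hC y
  | succ n ih =>
    rw [Function.iterate_succ_apply']
    exact norm_psiFun_le hM (continuous_iterate_psiFun hM hSF hU hA hf n).measurable ih y

theorem norm_iterate_psiFun_sub_le {f b : K → ℂ} (hf : Continuous f) (hb : IsBoundedMeasurable b)
    (hsub : ∀ y, (b y).re ≤ (psiFun U Φ b y).re) {c : ℂ} {ε C : ℝ} (hC : 0 ≤ C)
    (hbound : ∀ y, ‖f y - c‖ ≤ ε - C * (b y).re) (n : ℕ) (y : K) :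
    ‖(psiFun U Φ)^[n] f y - c‖ ≤ ε - C * (b y).re := by
  induction n generalizing y with
  | zero => exact hbound y
  | succ n ih =>
    rw [Function.iterate_succ_apply']
    exact norm_psiFun_sub_le hM (continuous_iterate_psiFun hM hSF hU hA hf n).isBoundedMeasurable
      hb hC ih (hsub y)

theorem monotone_iterate_psiFun {f : K → ℂ} (hf : Continuous f) (hsub : f ≤ psiFun U Φ f) :
    Monotone fun n => (psiFun U Φ)^[n] f := by
  refine monotone_nat_of_le_succ fun n => ?_
  induction n with
  | zero => exact hsub
  | succ n ih =>
    intro y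
    rw [Function.iterate_succ_apply' _ (n + 1), congrFun (Function.iterate_succ_apply' _ n f) y]
    exact psiFun_mono hM (continuous_iterate_psiFun hM hSF hU hA hf n).isBoundedMeasurable
      (continuous_iterate_psiFun hM hSF hU hA hf (n + 1)).isBoundedMeasurable ih y

/-- The barrier bound of `CondA.exists_barrier` holds for all iterates with the same constant. -/
theorem continuousAt_of_tendsto_iterate_psiFun {f q : K → ℂ} (hf : Continuous f)
    (hq : ∀ y, Tendsto (fun n => (psiFun U Φ)^[n] f y) atTop (𝓝 (q y))) {x : K} (hx : x ∉ U) :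
    ContinuousAt q x := by
  obtain ⟨h, hx0, hsub, hbound⟩ := hA.exists_barrier hf hx
  refine continuousAt_of_forall_norm_sub_le (Complex.continuous_re.comp h.continuous).continuousAt
    (by simp [hx0]) fun ε hε => ?_
  obtain ⟨C, hC, hfC⟩ := hbound ε hε
  refine ⟨C, fun y => le_of_tendsto' ((hq y).sub_const (q x)).norm fun n => ?_⟩
  rw [eq_of_tendsto_iterate_psiFun (hq x) hx]
  exact norm_iterate_psiFun_sub_le hM hSF hU hA hf h.continuous.isBoundedMeasurable
    (fun y => (Complex.le_def.1 (hsub y)).1) hC hfC n y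

theorem exists_tendstoUniformly_iterate_psiFun {f : K → ℂ} (hf : Continuous f)
    (hsub : f ≤ psiFun U Φ f) :
    ∃ q : C(K, ℂ), psiFun U Φ q = q ∧ (∀ x ∉ U, q x = f x) ∧ f ≤ q ∧
      TendstoUniformly (fun n => (psiFun U Φ)^[n] f) q atTop := by
  set F := fun n => (psiFun U Φ)^[n] f
  have hF : ∀ n, Continuous (F n) := continuous_iterate_psiFun hM hSF hU hA hf
  have hmono : Monotone F := monotone_iterate_psiFun hM hSF hU hA hf hsub
  obtain ⟨C, hC⟩ := hf.isBoundedMeasurable.2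
  have hFC : ∀ n y, ‖F n y‖ ≤ C := norm_iterate_psiFun_le hM hSF hU hA hf hC
  choose q hq hFq using fun y =>
    Complex.exists_tendsto_of_monotone (fun m n h => hmono h y) (hFC · y)
  have hfix : psiFun U Φ q = q := funext fun x =>
    tendsto_nhds_unique (tendsto_psiFun hM (fun n => (hF n).measurable) hFC hq x)
      (((hq x).comp (tendsto_add_atTop_nat 1)).congr fun n =>
        congrFun (Function.iterate_succ_apply' _ n f) x)
  have hcont : Continuous q := continuous_iff_continuousAt.2 fun x => by
    by_cases hx : x ∈ U
    · exact (hfix ▸ continuousOn_psiFun hSF (.of_tendsto (fun n => (hF n).measurable) hFC hq)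
        ).continuousAt (hU.mem_nhds hx)
    · exact continuousAt_of_tendsto_iterate_psiFun hM hSF hU hA hf hq hx
  exact ⟨⟨q, hcont⟩, hfix, fun x hx => eq_of_tendsto_iterate_psiFun (hq x) hx, fun y => hFq y 0,
    Complex.tendstoUniformly_of_monotone hF hmono hcont hq⟩

end Continuity

section MaximumPrinciple

variable {K : Type*} [TopologicalSpace K] {U : Set K} {Φ : (U → ℂ) → (U → ℂ)}

theorem CondB.eq_of_le_psiFun (hB : CondB U Φ) {g : C(K, ℂ)} (hg : ∀ x, (g x).im = 0)
    (hsub : ∀ y ∈ U, g y ≤ psiFun U Φ g y) {z : K} (hz : z ∈ U) (hmax : ∀ x, g x ≤ g z)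
    (x : K) : g x = g z :=
  hB g hg (fun u => by simpa only [psiFun_of_mem g u.2] using hsub u u.2) ⟨z, hz, hmax⟩ x z

variable [MeasurableSpace K] [CompactSpace K] [OpensMeasurableSpace K]

theorem CondB.eq_of_le_of_apply_eq (hB : CondB U Φ) (hM : IsMarkovOperator Φ) {F q : C(K, ℂ)}
    (hF : ∀ y, (F y).im = 0) (hsub : ⇑F ≤ psiFun U Φ F) (hfix : psiFun U Φ q = q)
    (hFq : ⇑F ≤ ⇑q) {z : K} (hz : z ∈ U) (hFqz : F z = q z) : F = q := by
  have hsub_eq : ⇑(F - q) = fun y => 0 + 1 * F y + (-1) * q y := by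
    funext y
    simp only [ContinuousMap.sub_apply]
    ring
  have hsub' : ∀ y ∈ U, (F - q) y ≤ psiFun U Φ ⇑(F - q) y := fun y _ => by
    rw [hsub_eq, psiFun_const_add_mul_add_mul hM F.continuous.isBoundedMeasurable
      q.continuous.isBoundedMeasurable, hfix]
    simpa [← sub_eq_add_neg] using hsub y
  have hmax : ∀ x, (F - q) x ≤ (F - q) z := fun x => by
    simpa [hFqz] using hFq x
  have him : ∀ x, ((F - q) x).im = 0 := fun x => by
    simp [hF x, ← (Complex.le_def.1 (hFq x)).2]
  ext x
  simpa [hFqz, sub_eq_zero] using hB.eq_of_le_psiFun him hsub' hz hmax x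

/-- `-(h - h z)²` is then fixed and attains its maximum `0` at `z ∈ U`. -/
theorem CondB.apply_eq_of_psiFun_sq_norm (hB : CondB U Φ) (hM : IsMarkovOperator Φ)
    {h : C(K, ℂ)} (him : ∀ y, (h y).im = 0) (hfix : psiFun U Φ h = h)
    (hsq : psiFun U Φ (fun y => ((‖h y‖ ^ 2 : ℝ) : ℂ)) = fun y => ((‖h y‖ ^ 2 : ℝ) : ℂ))
    {z : K} (hz : z ∈ U) (y : K) : h y = h z := by
  have hr : ∀ y, h y = ((h y).re : ℂ) := fun y => Complex.ext rfl (by simp [him y])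
  let G : C(K, ℂ) := ⟨fun y => ((-((h y).re - (h z).re) ^ 2 : ℝ) : ℂ), by fun_prop⟩
  have hG : ⇑G = fun y => -h z ^ 2 + 2 * h z * h y + (-1) * ((‖h y‖ ^ 2 : ℝ) : ℂ) := by
    funext y
    rw [hr y, hr z, Complex.norm_real, Real.norm_eq_abs, sq_abs]
    simp only [G, ContinuousMap.coe_mk]
    push_cast
    ring
  have hGfix : psiFun U Φ G = G := by
    rw [hG]
    funext y
    rw [psiFun_const_add_mul_add_mul hM h.continuous.isBoundedMeasurable
      h.continuous.isBoundedMeasurable.ofReal_sq_norm, hfix, hsq]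
  have hGz := hB.eq_of_le_psiFun (fun x => Complex.ofReal_im _)
    (fun y _ => (congrFun hGfix y).ge) hz
    (fun x => Complex.real_le_real.2 (by simp; positivity)) y
  simp only [G, ContinuousMap.coe_mk, sub_self, Complex.ofReal_inj] at hGz
  rw [hr y, hr z]
  congr 1
  nlinarith [sq_nonneg ((h y).re - (h z).re)]

end MaximumPrinciple

section KeyElement

variable {K : Type*} [TopologicalSpace K] [MeasurableSpace K] [CompactSpace K]
  [OpensMeasurableSpace K] {U : Set K} {Φ : (U → ℂ) → (U → ℂ)}
  (hM : IsMarkovOperator Φ) (hSF : HasStrongFeller Φ) (hU : IsOpen U) (hA : CondA U Φ)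
include hM hSF hU hA

theorem exists_psiFun_fixed_nonconstant (hbd : ∃ a b : K, a ∈ Uᶜ ∧ b ∈ Uᶜ ∧ a ≠ b) :
    ∃ h : C(K, ℂ), psiFun U Φ h = h ∧ (∀ y, (h y).im = 0) ∧ ∃ a b, h a ≠ h b := by
  obtain ⟨a, b, ha, hb, hab⟩ := hbd
  obtain ⟨g, hga, hgneg, hgsub⟩ := hA.exists_le_psiFun ha
  obtain ⟨h, hfix, hbdry, hgh, -⟩ :=
    exists_tendstoUniformly_iterate_psiFun hM hSF hU hA g.continuous hgsub
  refine ⟨h, hfix, fun y => ?_, a, b, ?_⟩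
  · rw [← (Complex.le_def.1 (hgh y)).2]
    rcases eq_or_ne y a with rfl | hy
    · simp [hga]
    · exact (Complex.lt_def.1 (hgneg y hy)).2
  · rw [hbdry a ha, hbdry b hb, hga]
    exact (hgneg b hab.symm).ne'

theorem exists_mem_Lset_forall_ne_zero (hB : CondB U Φ)
    (hbd : ∃ a b : K, a ∈ Uᶜ ∧ b ∈ Uᶜ ∧ a ≠ b) : ∃ g ∈ Lset U Φ, ∀ z ∈ U, g z ≠ 0 := by
  obtain ⟨h, hfix, him, a, b, hab⟩ := exists_psiFun_fixed_nonconstant hM hSF hU hA hbd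
  let F : C(K, ℂ) := ⟨fun y => ((‖h y‖ ^ 2 : ℝ) : ℂ), by fun_prop⟩
  have hFsub : ⇑F ≤ psiFun U Φ F := fun y => by
    have := ofReal_sq_norm_psiFun_le hM h.continuous.isBoundedMeasurable y
    rwa [congrFun hfix y] at this
  obtain ⟨q, hqfix, -, hFq, hlim⟩ :=
    exists_tendstoUniformly_iterate_psiFun hM hSF hU hA F.continuous hFsub
  refine ⟨q - F, ⟨h, hfix, by simpa [F] using hlim⟩, fun z hz hgz => hab ?_⟩
  have hFq' : F = q := hB.eq_of_le_of_apply_eq hM (fun y => Complex.ofReal_im _) hFsub hqfix hFq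
    hz (sub_eq_zero.1 hgz).symm
  have hFfix : psiFun U Φ F = F := by rw [hFq']; exact hqfix
  rw [hB.apply_eq_of_psiFun_sq_norm hM him hfix hFfix hz a,
    hB.apply_eq_of_psiFun_sq_norm hM him hfix hFfix hz b]

end KeyElement

set_option synthInstance.maxHeartbeats 1000000 in
theorem stmt17_general {K : Type*} [MetricSpace K] [CompactSpace K]
    [MeasurableSpace K] [BorelSpace K]
    (U : Set K) (hUopen : IsOpen U)
    (hbd : ∃ a b : K, a ∈ Uᶜ ∧ b ∈ Uᶜ ∧ a ≠ b)
    (Φ : (↥U → ℂ) → (↥U → ℂ))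
    (hM : IsMarkovOperator Φ) (hSF : HasStrongFeller Φ)
    (hA : CondA U Φ) (hB : CondB U Φ) :
    ((Ideal.span (Lset U Φ)).topologicalClosure : Set C(K, ℂ)) =
      {f : C(K, ℂ) | ∀ x ∈ Uᶜ, f x = 0} := by
  obtain ⟨g, hgL, hg⟩ := exists_mem_Lset_forall_ne_zero hM hSF hUopen hA hB hbd
  have hclosure := ContinuousMap.closure_eq_idealOfSet
    (Ideal.span_le.2 fun f hf => ContinuousMap.mem_idealOfSet.2 fun x hx =>
      apply_eq_zero_of_mem_Lset hf hx)
    fun z hz => ⟨g, Ideal.subset_span hgL, hg z hz⟩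
  rw [Submodule.topologicalClosure_coe, ← Ideal.coe_closure, hclosure]
  ext f
  exact ContinuousMap.mem_idealOfSet

set_option synthInstance.maxHeartbeats 1000000 in
/-- The norm-closed ideal of `C(K)` generated by
`L = {π(|h|²) − |h|² : h ∈ Fix(Ψ)}` equals the ideal of all `f ∈ C(K)`
vanishing identically on `∂U`. -/
theorem stmt17 {K : Type*} [MetricSpace K] [CompactSpace K]
    [MeasurableSpace K] [BorelSpace K]
    (U : Set K) (hUopen : IsOpen U) (hUdense : Dense U)
    (hbd : ∃ a b : K, a ∈ Uᶜ ∧ b ∈ Uᶜ ∧ a ≠ b)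
    (Φ : (↥U → ℂ) → (↥U → ℂ))
    (hM : IsMarkovOperator Φ) (hSF : HasStrongFeller Φ)
    (hA : CondA U Φ) (hB : CondB U Φ) :
    ((Ideal.span (Lset U Φ)).topologicalClosure : Set C(K, ℂ)) =
      {f : C(K, ℂ) | ∀ x ∈ Uᶜ, f x = 0} :=
  stmt17_general U hUopen hbd Φ hM hSF hA hB
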